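/- arXiv:1611.08748 — 2 statements merged into one kernel-verified Lean document; each statement's English description precedes it below -/
import Mathlib

section
/- Suppose 0 < a < b < 1 and there exists ε₀ > 0 such that: m is constant on [a,b]; m is non-decreasing on [a−ε₀, a]; m is non-increasing on [b, b+ε₀]; and for every ε ∈ (0, ε₀) there exist x ∈ (a−ε, a) with m'(x) > 0 and y ∈ (b, b+ε) with m'(y) < 0 (so [a,b] is a segment of local maximum of type [a^I, b^D]). Then limsup_{s→∞} λ₁ᴺ(s) ≤ λ₁^{NN}(a,b). -/
open MeasureTheory Filter Set

/-- The Neumann principal eigenvalue of `-φ'' - 2 s m' φ' + c φ = λ φ` on `(0,1)`,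
via its variational characterization. -/
noncomputable def lambdaN (m c : ℝ → ℝ) (s : ℝ) : ℝ :=
  sInf {l : ℝ | ∃ φ : ℝ → ℝ, ContDiff ℝ 1 φ ∧
    (∫ x in (0:ℝ)..1, Real.exp (2 * s * m x) * (φ x) ^ 2) = 1 ∧
    l = ∫ x in (0:ℝ)..1, Real.exp (2 * s * m x) * ((deriv φ x) ^ 2 + c x * (φ x) ^ 2)}

/-- The principal eigenvalue of `-φ'' + c φ = λ φ` on `(a,b)`, with a Dirichlet
condition at `a` iff `dirA = true` and at `b` iff `dirB = true`
(Neumann, i.e. no constraint, otherwise), via its variational characterization. -/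
noncomputable def lambdaIJ (c : ℝ → ℝ) (dirA dirB : Bool) (a b : ℝ) : ℝ :=
  sInf {l : ℝ | ∃ φ : ℝ → ℝ, ContDiff ℝ 1 φ ∧
    (dirA = true → φ a = 0) ∧ (dirB = true → φ b = 0) ∧
    (∫ x in a..b, (φ x) ^ 2) = 1 ∧
    l = ∫ x in a..b, ((deriv φ x) ^ 2 + c x * (φ x) ^ 2)}

/-!
As `s → ∞` the weight `e^{2 s m}` concentrates where `m` is largest. Take a near-minimiser `φ` of
`λ₁ᴺᴺ(a, b)` and cut it off in the `2δ`-neighbourhood of `[a, b]`, leaving it unchanged on the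
`δ`-neighbourhood. There the weight is at most `e^{2 s m(a)}`, with equality on `[a, b]`; on the two
transition layers `m ≤ θ < m(a)`, the drop being strict because `m'` is nonzero somewhere in
`(a - δ, a)` and in `(b, b + δ)`. After shifting `c` by a constant so that the energy density is
nonnegative, the Rayleigh quotient of the cut-off function is at most the energy of `φ` on the
`δ`-neighbourhood plus `O(e^{2 s (θ - m(a))})`, and the former tends to that on `[a, b]` as `δ → 0`.
-/

open Real

theorem MonotoneOn.lt_of_deriv_pos {f : ℝ → ℝ} {u v x : ℝ} (hf : MonotoneOn f (Icc u v))
    (hx : x ∈ Ioo u v) (hfx : 0 < deriv f x) : f u < f v := by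
  by_contra! hvu
  have huv : u ≤ v := (hx.1.trans hx.2).le
  have hconst : ∀ y ∈ Icc u v, f y = f u := fun y hy =>
    le_antisymm ((hf hy (right_mem_Icc.2 huv) hy.2).trans hvu) (hf (left_mem_Icc.2 huv) hy hy.1)
  have hlocal : f =ᶠ[nhds x] fun _ => f u := by
    filter_upwards [Ioo_mem_nhds hx.1 hx.2] with y hy using hconst y (Ioo_subset_Icc_self hy)
  rw [hlocal.deriv_eq, deriv_const] at hfx
  exact hfx.false

theorem AntitoneOn.lt_of_deriv_neg {f : ℝ → ℝ} {u v x : ℝ} (hf : AntitoneOn f (Icc u v))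
    (hx : x ∈ Ioo u v) (hfx : deriv f x < 0) : f v < f u := by
  have := hf.neg.lt_of_deriv_pos hx (by rw [deriv.fun_neg]; linarith)
  linarith

theorem isMaxOn_of_monotoneOn_of_antitoneOn {m : ℝ → ℝ} {a b ε₀ δ : ℝ}
    (hconst : ∀ x ∈ Icc a b, m x = m a) (hmono : MonotoneOn m (Icc (a - ε₀) a))
    (hanti : AntitoneOn m (Icc b (b + ε₀))) (hab : a ≤ b) (hδ : δ ≤ ε₀) :
    IsMaxOn m (Icc (a - δ) (b + δ)) a := by
  rintro x ⟨hx₁, hx₂⟩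
  rcases le_total x a with hxa | hax
  · exact hmono ⟨by linarith, hxa⟩ ⟨by linarith, le_rfl⟩ hxa
  rcases le_total x b with hxb | hbx
  · exact (hconst x ⟨hax, hxb⟩).le
  · show m x ≤ m a
    rw [← hconst b ⟨hab, le_rfl⟩]
    exact hanti ⟨le_rfl, by linarith⟩ ⟨hbx, by linarith⟩ hbx

theorem exists_lt_forall_le_of_deriv_ne_zero {m : ℝ → ℝ} {a b ε₀ δ : ℝ}
    (hmono : MonotoneOn m (Icc (a - ε₀) a)) (hanti : AntitoneOn m (Icc b (b + ε₀)))
    (hba : m b = m a) (hδ : 2 * δ ≤ ε₀)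
    (hx : ∃ x ∈ Ioo (a - δ) a, 0 < deriv m x) (hy : ∃ y ∈ Ioo b (b + δ), deriv m y < 0) :
    ∃ θ < m a, ∀ x ∈ Ioo (a - 2 * δ) (b + 2 * δ) \ Ioo (a - δ) (b + δ), m x ≤ θ := by
  obtain ⟨x, hx, hmx⟩ := hx
  obtain ⟨y, hy, hmy⟩ := hy
  have hδ₀ : 0 < δ := by linarith [hx.1, hx.2]
  have hleft : m (a - δ) < m a :=
    (hmono.mono (Icc_subset_Icc (by linarith) le_rfl)).lt_of_deriv_pos hx hmx
  have hright : m (b + δ) < m a :=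
    hba ▸ (hanti.mono (Icc_subset_Icc le_rfl (by linarith))).lt_of_deriv_neg hy hmy
  refine ⟨max (m (a - δ)) (m (b + δ)), max_lt hleft hright, ?_⟩
  rintro z ⟨⟨hz₁, hz₂⟩, hz⟩
  rw [mem_Ioo, not_and_or, not_lt, not_lt] at hz
  rcases hz with hz | hz
  · exact le_max_of_le_left (hmono ⟨by linarith, by linarith⟩ ⟨by linarith, by linarith⟩ hz)
  · exact le_max_of_le_right (hanti ⟨by linarith, by linarith⟩ ⟨by linarith, by linarith⟩ hz)

theorem exists_contDiff_eq_on_Icc_eq_zero_off_Ioo {φ : ℝ → ℝ} (hφ : ContDiff ℝ 1 φ)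
    {a b δ : ℝ} (hab : a ≤ b) (hδ : 0 < δ) :
    ∃ ψ : ℝ → ℝ, ContDiff ℝ 1 ψ ∧
      (∀ x ∈ Icc (a - δ) (b + δ), ψ x = φ x ∧ deriv ψ x = deriv φ x) ∧
      ∀ x ∉ Ioo (a - 2 * δ) (b + 2 * δ), ψ x = 0 ∧ deriv ψ x = 0 := by
  let χ : ContDiffBump ((a + b) / 2) :=
    ⟨(b - a) / 2 + δ, (b - a) / 2 + 2 * δ, by linarith, by linarith⟩
  have hχ₁ : ∀ x ∈ Icc (a - δ) (b + δ), χ x = 1 ∧ deriv χ x = 0 := by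
    intro x hx
    have h₁ : χ x = 1 := χ.one_of_mem_closedBall <| by
      rw [Real.closedBall_eq_Icc]; convert hx using 2 <;> (dsimp [χ]; ring)
    exact ⟨h₁, IsLocalMax.deriv_eq_zero (.of_forall fun _ => h₁ ▸ χ.le_one)⟩
  have hχ₀ : ∀ x ∉ Ioo (a - 2 * δ) (b + 2 * δ), χ x = 0 ∧ deriv χ x = 0 := by
    intro x hx
    have h₀ : χ x = 0 := Function.notMem_support.1 <| by
      rw [χ.support_eq, Real.ball_eq_Ioo]; convert hx using 3 <;> (dsimp [χ]; ring)
    exact ⟨h₀, IsLocalMin.deriv_eq_zero (.of_forall fun _ => h₀ ▸ χ.nonneg)⟩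
  have hderiv : ∀ x, deriv (fun y => φ y * χ y) x = deriv φ x * χ x + φ x * deriv χ x :=
    fun x => deriv_mul (hφ.differentiable one_ne_zero x) (χ.contDiff.differentiable one_ne_zero x)
  refine ⟨fun y => φ y * χ y, hφ.mul χ.contDiff, fun x hx => ?_, fun x hx => ?_⟩
  · simp [hderiv, hχ₁ x hx]
  · simp [hderiv, hχ₀ x hx]

theorem exists_pos_integral_sub_add_lt {f : ℝ → ℝ} (hf : Continuous f) {a b L r : ℝ}
    (h : ∫ x in a..b, f x < L) (hr : 0 < r) :
    ∃ δ ∈ Ioo 0 r, ∫ x in (a - δ)..(b + δ), f x < L := by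
  have hprim :=
    intervalIntegral.continuous_primitive (fun u v => hf.intervalIntegrable (μ := volume) u v) 0
  have hcont : Continuous fun t => ∫ x in (a - t)..(b + t), f x := by
    have hdiff : (fun t => ∫ x in (a - t)..(b + t), f x) =
        fun t => (∫ x in (0:ℝ)..(b + t), f x) - ∫ x in (0:ℝ)..(a - t), f x :=
      funext fun t => (intervalIntegral.integral_interval_sub_left (hf.intervalIntegrable _ _)
        (hf.intervalIntegrable _ _)).symm
    rw [hdiff]
    exact (hprim.comp (continuous_const.add continuous_id)).sub
      (hprim.comp (continuous_const.sub continuous_id))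
  have hev : ∀ᶠ t in nhdsWithin 0 (Ioi 0), ∫ x in (a - t)..(b + t), f x < L :=
    nhdsWithin_le_nhds ((hcont.tendsto 0).eventually_lt_const (by simpa using h))
  obtain ⟨δ, hδL, hδ⟩ := (hev.and (Ioo_mem_nhdsGT hr)).exists
  exact ⟨δ, hδ, hδL⟩

theorem exists_localized_of_integral_lt {c φ : ℝ → ℝ} (hc : Continuous c) {a b L r : ℝ}
    (hab : a ≤ b) (hφ : ContDiff ℝ 1 φ) (hφn : ∫ x in a..b, φ x ^ 2 = 1)
    (hφL : ∫ x in a..b, (deriv φ x ^ 2 + c x * φ x ^ 2) < L) (hr : 0 < r) :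
    ∃ δ ∈ Ioo 0 r, ∃ ψ : ℝ → ℝ, ContDiff ℝ 1 ψ ∧
      (∀ x ∉ Ioo (a - 2 * δ) (b + 2 * δ), ψ x = 0 ∧ deriv ψ x = 0) ∧
      ∫ x in a..b, ψ x ^ 2 = 1 ∧ ∫ x in (a - δ)..(b + δ), (deriv ψ x ^ 2 + c x * ψ x ^ 2) < L := by
  have hφ' := hφ.continuous_deriv le_rfl
  have hφc := hφ.continuous
  obtain ⟨δ, hδ, hδL⟩ := exists_pos_integral_sub_add_lt (by fun_prop) hφL hr
  obtain ⟨ψ, hψ, hψφ, hψ_out⟩ := exists_contDiff_eq_on_Icc_eq_zero_off_Ioo hφ hab hδ.1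
  refine ⟨δ, hδ, ψ, hψ, hψ_out, ?_, ?_⟩
  · rw [← hφn]
    refine intervalIntegral.integral_congr fun x hx => ?_
    rw [uIcc_of_le hab] at hx
    simp only [(hψφ x ⟨by linarith [hx.1, hδ.1], by linarith [hx.2, hδ.1]⟩).1]
  · refine lt_of_eq_of_lt (intervalIntegral.integral_congr fun x hx => ?_) hδL
    rw [uIcc_of_le (by linarith [hδ.1])] at hx
    simp only [hψφ x hx]

theorem exists_nonneg_forall_neg_le {c : ℝ → ℝ} (hc : Continuous c) (u v : ℝ) :
    ∃ K, 0 ≤ K ∧ ∀ x ∈ Icc u v, -K ≤ c x := by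
  obtain ⟨k, hk⟩ := isCompact_Icc.bddBelow_image hc.continuousOn (K := Icc u v)
  exact ⟨|k|, abs_nonneg k, fun x hx => (neg_abs_le k).trans (hk (mem_image_of_mem c hx))⟩

theorem neg_mul_integral_le_integral_energy {w c φ : ℝ → ℝ} {u v K : ℝ} (huv : u ≤ v)
    (hw : Continuous w) (hw₀ : ∀ x, 0 ≤ w x) (hc : Continuous c)
    (hK : ∀ x ∈ Icc u v, -K ≤ c x) (hφ : ContDiff ℝ 1 φ) :
    -K * ∫ x in u..v, w x * φ x ^ 2 ≤ ∫ x in u..v, w x * (deriv φ x ^ 2 + c x * φ x ^ 2) := by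
  have hφ' := hφ.continuous_deriv le_rfl
  have hφc := hφ.continuous
  rw [← intervalIntegral.integral_const_mul]
  refine intervalIntegral.integral_mono_on huv (Continuous.intervalIntegrable (by fun_prop) _ _)
    (Continuous.intervalIntegrable (by fun_prop) _ _) fun x hx => ?_
  have hcK : 0 ≤ c x + K := by linarith [hK x hx]
  nlinarith [mul_nonneg (hw₀ x) (sq_nonneg (deriv φ x)),
    mul_nonneg (hw₀ x) (mul_nonneg hcK (sq_nonneg (φ x)))]

theorem integral_energy_add_const {w c φ : ℝ → ℝ} (hw : Continuous w) (hc : Continuous c)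
    (hφ : ContDiff ℝ 1 φ) (K u v : ℝ) :
    ∫ x in u..v, w x * (deriv φ x ^ 2 + (c x + K) * φ x ^ 2) =
      (∫ x in u..v, w x * (deriv φ x ^ 2 + c x * φ x ^ 2)) + K * ∫ x in u..v, w x * φ x ^ 2 := by
  have hφ' := hφ.continuous_deriv le_rfl
  have hφc := hφ.continuous
  rw [← intervalIntegral.integral_const_mul, ← intervalIntegral.integral_add
    (Continuous.intervalIntegrable (by fun_prop) _ _)
    (Continuous.intervalIntegrable (by fun_prop) _ _)]
  congr 1 with x
  ring

theorem neg_le_lambdaN {m c : ℝ → ℝ} (hm : Continuous m) (hc : Continuous c) {K : ℝ}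
    (hK₀ : 0 ≤ K) (hK : ∀ x ∈ Icc (0:ℝ) 1, -K ≤ c x) (s : ℝ) : -K ≤ lambdaN m c s := by
  -- `0 ≤ K` is needed for the junk value `sInf ∅ = 0`
  refine Real.le_sInf ?_ (neg_nonpos.2 hK₀)
  rintro l ⟨φ, hφ, hφn, rfl⟩
  simpa [hφn] using neg_mul_integral_le_integral_energy (w := fun x => exp (2 * s * m x))
    zero_le_one (by fun_prop) (fun x => (exp_pos _).le) hc hK hφ

theorem lambdaN_le {m c φ : ℝ → ℝ} (hm : Continuous m) (hc : Continuous c)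
    (hφ : ContDiff ℝ 1 φ) {s : ℝ} (hφn : ∫ x in (0:ℝ)..1, exp (2 * s * m x) * φ x ^ 2 = 1) :
    lambdaN m c s ≤ ∫ x in (0:ℝ)..1, exp (2 * s * m x) * (deriv φ x ^ 2 + c x * φ x ^ 2) := by
  obtain ⟨K, -, hK⟩ := exists_nonneg_forall_neg_le hc 0 1
  refine csInf_le ⟨-K, ?_⟩ ⟨φ, hφ, hφn, rfl⟩
  rintro l ⟨χ, hχ, hχn, rfl⟩
  simpa [hχn] using neg_mul_integral_le_integral_energy (w := fun x => exp (2 * s * m x))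
    zero_le_one (by fun_prop) (fun x => (exp_pos _).le) hc hK hχ

theorem lambdaN_le_div {m c ψ : ℝ → ℝ} (hm : Continuous m) (hc : Continuous c)
    (hψ : ContDiff ℝ 1 ψ) {s : ℝ} (hN : 0 < ∫ x in (0:ℝ)..1, exp (2 * s * m x) * ψ x ^ 2) :
    lambdaN m c s ≤ (∫ x in (0:ℝ)..1, exp (2 * s * m x) * (deriv ψ x ^ 2 + c x * ψ x ^ 2)) /
      ∫ x in (0:ℝ)..1, exp (2 * s * m x) * ψ x ^ 2 := by
  set N := ∫ x in (0:ℝ)..1, exp (2 * s * m x) * ψ x ^ 2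
  set t := (√N)⁻¹
  have ht : t ^ 2 = N⁻¹ := by rw [inv_pow, sq_sqrt hN.le]
  have hscale : ∀ x,
      exp (2 * s * m x) * (deriv (fun y => t * ψ y) x ^ 2 + c x * (t * ψ x) ^ 2) =
        t ^ 2 * (exp (2 * s * m x) * (deriv ψ x ^ 2 + c x * ψ x ^ 2)) := by
    intro x; rw [deriv_const_mul_field]; ring
  have := lambdaN_le (c := c) hm hc (contDiff_const.mul hψ) (φ := fun y => t * ψ y) (s := s) ?_
  · rwa [funext hscale, intervalIntegral.integral_const_mul, ht, ← div_eq_inv_mul] at this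
  · simp_rw [mul_pow, mul_left_comm _ (t ^ 2), intervalIntegral.integral_const_mul, ht]
    exact inv_mul_cancel₀ hN.ne'

theorem lambdaN_le_sub_of_integral_le {m c ψ : ℝ → ℝ} (hm : Continuous m) (hc : Continuous c)
    (hψ : ContDiff ℝ 1 ψ) {s K L : ℝ} (hN : 0 < ∫ x in (0:ℝ)..1, exp (2 * s * m x) * ψ x ^ 2)
    (h : ∫ x in (0:ℝ)..1, exp (2 * s * m x) * (deriv ψ x ^ 2 + (c x + K) * ψ x ^ 2) ≤
      L * ∫ x in (0:ℝ)..1, exp (2 * s * m x) * ψ x ^ 2) :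
    lambdaN m c s ≤ L - K := by
  rw [integral_energy_add_const (by fun_prop) hc hψ] at h
  refine (lambdaN_le_div hm hc hψ hN).trans ?_
  rw [div_le_iff₀ hN]
  linarith

theorem exists_lt_lambdaIJ_add (c : ℝ → ℝ) {a b η : ℝ} (hab : a < b) (hη : 0 < η) :
    ∃ φ : ℝ → ℝ, ContDiff ℝ 1 φ ∧ ∫ x in a..b, φ x ^ 2 = 1 ∧
      ∫ x in a..b, (deriv φ x ^ 2 + c x * φ x ^ 2) < lambdaIJ c false false a b + η := by
  have hne : (√(b - a))⁻¹ ^ 2 * (b - a) = 1 := by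
    rw [inv_pow, sq_sqrt (sub_pos.2 hab).le, inv_mul_cancel₀ (sub_pos.2 hab).ne']
  obtain ⟨l, ⟨φ, hφ, -, -, hφn, rfl⟩, hl⟩ := Real.lt_sInf_add_pos (s := {l : ℝ | ∃ φ : ℝ → ℝ,
    ContDiff ℝ 1 φ ∧ (false = true → φ a = 0) ∧ (false = true → φ b = 0) ∧
      (∫ x in a..b, (φ x) ^ 2) = 1 ∧ l = ∫ x in a..b, ((deriv φ x) ^ 2 + c x * (φ x) ^ 2)})
    ⟨_, fun _ => (√(b - a))⁻¹, contDiff_const, by simp, by simp, by simpa [mul_comm] using hne,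
      rfl⟩ hη
  exact ⟨φ, hφ, hφn, hl⟩

theorem integral_le_integral_add_mul_of_le_off {g f : ℝ → ℝ} {u p q v B : ℝ}
    (hg : Continuous g) (hf : Continuous f) (hup : u ≤ p) (hpq : p ≤ q) (hqv : q ≤ v)
    (hf₀ : ∀ x ∈ Icc p q, 0 ≤ f x) (hB : 0 ≤ B) (hgf : ∀ x ∈ Icc u v \ Ioo p q, g x ≤ B * f x) :
    ∫ x in u..v, g x ≤ (∫ x in p..q, g x) + B * ∫ x in u..v, f x := by
  have hgi : ∀ a b, IntervalIntegrable g volume a b := hg.intervalIntegrable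
  have hfi : ∀ a b, IntervalIntegrable f volume a b := hf.intervalIntegrable
  have hBfi : ∀ a b, IntervalIntegrable (fun x => B * f x) volume a b :=
    (continuous_const.mul hf).intervalIntegrable
  rw [← intervalIntegral.integral_add_adjacent_intervals (hgi u p) (hgi p v),
    ← intervalIntegral.integral_add_adjacent_intervals (hgi p q) (hgi q v),
    ← intervalIntegral.integral_add_adjacent_intervals (hfi u p) (hfi p v),
    ← intervalIntegral.integral_add_adjacent_intervals (hfi p q) (hfi q v)]
  have hleft : ∫ x in u..p, g x ≤ B * ∫ x in u..p, f x := by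
    rw [← intervalIntegral.integral_const_mul]
    exact intervalIntegral.integral_mono_on hup (hgi u p) (hBfi u p) fun x hx =>
      hgf x ⟨⟨hx.1, by linarith [hx.2]⟩, fun h => by linarith [h.1, hx.2]⟩
  have hright : ∫ x in q..v, g x ≤ B * ∫ x in q..v, f x := by
    rw [← intervalIntegral.integral_const_mul]
    exact intervalIntegral.integral_mono_on hqv (hgi q v) (hBfi q v) fun x hx =>
      hgf x ⟨⟨by linarith [hx.1], hx.2⟩, fun h => by linarith [h.2, hx.1]⟩
  have hmid : 0 ≤ B * ∫ x in p..q, f x := mul_nonneg hB (intervalIntegral.integral_nonneg hpq hf₀)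
  linarith

theorem exp_le_integral_exp_mul {m g : ℝ → ℝ} (hm : Continuous m) (hg : Continuous g)
    (hg₀ : ∀ x, 0 ≤ g x) {s a b : ℝ} (ha : 0 ≤ a) (hab : a ≤ b) (hb : b ≤ 1)
    (hmab : ∀ x ∈ Icc a b, m x = m a) (hgab : ∫ x in a..b, g x = 1) :
    exp (2 * s * m a) ≤ ∫ x in (0:ℝ)..1, exp (2 * s * m x) * g x :=
  calc exp (2 * s * m a) = ∫ x in a..b, exp (2 * s * m a) * g x := by
        rw [intervalIntegral.integral_const_mul, hgab, mul_one]
    _ = ∫ x in a..b, exp (2 * s * m x) * g x := by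
        refine intervalIntegral.integral_congr fun x hx => ?_
        rw [uIcc_of_le hab] at hx
        simp only [hmab x hx]
    _ ≤ ∫ x in (0:ℝ)..1, exp (2 * s * m x) * g x :=
        intervalIntegral.integral_mono_interval ha hab hb
          (.of_forall fun x => mul_nonneg (exp_pos _).le (hg₀ x))
          (Continuous.intervalIntegrable (by fun_prop) _ _)

theorem integral_exp_mul_le {m f : ℝ → ℝ} (hm : Continuous m) (hf : Continuous f)
    {s p q p' q' M θ : ℝ} (hs : 0 ≤ s) (hp : 0 ≤ p) (hpq : p ≤ q) (hq : q ≤ 1)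
    (hf₀ : ∀ x ∈ Icc (0:ℝ) 1, 0 ≤ f x) (hf_out : ∀ x ∉ Ioo p' q', f x = 0)
    (hmM : ∀ x ∈ Icc p q, m x ≤ M) (hmθ : ∀ x ∈ Ioo p' q' \ Ioo p q, m x ≤ θ) :
    ∫ x in (0:ℝ)..1, exp (2 * s * m x) * f x ≤
      exp (2 * s * M) * (∫ x in p..q, f x) + exp (2 * s * θ) * ∫ x in (0:ℝ)..1, f x := by
  have hexp_mono : ∀ {y z}, y ≤ z → exp (2 * s * y) ≤ exp (2 * s * z) := fun h =>
    exp_le_exp.2 (mul_le_mul_of_nonneg_left h (by linarith))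
  have hpq_sub : Icc p q ⊆ Icc 0 1 := Icc_subset_Icc hp hq
  have hmid : ∫ x in p..q, exp (2 * s * m x) * f x ≤ exp (2 * s * M) * ∫ x in p..q, f x := by
    rw [← intervalIntegral.integral_const_mul]
    exact intervalIntegral.integral_mono_on hpq (Continuous.intervalIntegrable (by fun_prop) _ _)
      (Continuous.intervalIntegrable (by fun_prop) _ _) fun x hx =>
        mul_le_mul_of_nonneg_right (hexp_mono (hmM x hx)) (hf₀ x (hpq_sub hx))
  refine (integral_le_integral_add_mul_of_le_off (by fun_prop) hf hp hpq hq
    (fun x hx => hf₀ x (hpq_sub hx)) (exp_pos _).le fun x hx => ?_).trans (by linarith)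
  by_cases hx' : x ∈ Ioo p' q'
  · exact mul_le_mul_of_nonneg_right (hexp_mono (hmθ x ⟨hx', hx.2⟩)) (hf₀ x hx.1)
  · simp [hf_out x hx']

theorem eventually_lambdaN_le_of_localized {m c ψ : ℝ → ℝ} (hm : Continuous m)
    (hc : Continuous c) (hψ : ContDiff ℝ 1 ψ) {K a b p q p' q' θ L : ℝ}
    (hK : ∀ x ∈ Icc (0:ℝ) 1, -K ≤ c x) (hp : 0 ≤ p) (hpa : p ≤ a) (hab : a ≤ b) (hbq : b ≤ q)
    (hq : q ≤ 1) (hmab : ∀ x ∈ Icc a b, m x = m a) (hmpq : ∀ x ∈ Icc p q, m x ≤ m a)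
    (hθ : θ < m a) (hmθ : ∀ x ∈ Ioo p' q' \ Ioo p q, m x ≤ θ)
    (hψ_out : ∀ x ∉ Ioo p' q', ψ x = 0 ∧ deriv ψ x = 0) (hψn : ∫ x in a..b, ψ x ^ 2 = 1)
    (hL : ∫ x in p..q, (deriv ψ x ^ 2 + (c x + K) * ψ x ^ 2) < L) :
    ∀ᶠ s in atTop, lambdaN m c s ≤ L - K := by
  have hψc := hψ.continuous
  have hψ' := hψ.continuous_deriv le_rfl
  set F := fun x => deriv ψ x ^ 2 + (c x + K) * ψ x ^ 2
  have hF₀ : ∀ x ∈ Icc (0:ℝ) 1, 0 ≤ F x := fun x hx => by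
    have : 0 ≤ c x + K := by linarith [hK x hx]
    positivity
  have hL₀ : 0 ≤ L := (intervalIntegral.integral_nonneg (hpa.trans (hab.trans hbq))
    fun x hx => hF₀ x (Icc_subset_Icc hp hq hx)).trans hL.le
  have hdecay :
      Tendsto (fun s => exp (2 * s * (θ - m a)) * ∫ x in (0:ℝ)..1, F x) atTop (nhds 0) := by
    have : Tendsto (fun s => 2 * s * (θ - m a)) atTop atBot :=
      (tendsto_id.const_mul_atTop two_pos).atTop_mul_const_of_neg (sub_neg.2 hθ)
    simpa using (tendsto_exp_atBot.comp this).mul_const (∫ x in (0:ℝ)..1, F x)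
  filter_upwards [eventually_ge_atTop 0, hdecay.eventually_lt_const (sub_pos.2 hL)]
    with s hs hsmall
  have hmass := exp_le_integral_exp_mul (s := s) hm (hψc.pow 2) (fun x => sq_nonneg _)
    (hp.trans hpa) hab (hbq.trans hq) hmab hψn
  refine lambdaN_le_sub_of_integral_le hm hc hψ ((exp_pos _).trans_le hmass) ?_
  have hsplit : exp (2 * s * θ) = exp (2 * s * m a) * exp (2 * s * (θ - m a)) := by
    rw [← exp_add]; ring_nf
  calc ∫ x in (0:ℝ)..1, exp (2 * s * m x) * F x
      ≤ exp (2 * s * m a) * (∫ x in p..q, F x) + exp (2 * s * θ) * ∫ x in (0:ℝ)..1, F x :=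
        integral_exp_mul_le hm (by fun_prop) hs hp (hpa.trans (hab.trans hbq)) hq hF₀
          (fun x hx => by simp [F, hψ_out x hx]) hmpq hmθ
    _ = exp (2 * s * m a) *
          ((∫ x in p..q, F x) + exp (2 * s * (θ - m a)) * ∫ x in (0:ℝ)..1, F x) := by
        rw [hsplit]; ring
    _ ≤ exp (2 * s * m a) * L := mul_le_mul_of_nonneg_left (by linarith) (exp_pos _).le
    _ ≤ L * ∫ x in (0:ℝ)..1, exp (2 * s * m x) * ψ x ^ 2 := by
        rw [mul_comm]; exact mul_le_mul_of_nonneg_left hmass hL₀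

/-- If `[a,b]` is a segment of local maximum of type `[aᴵ, bᴰ]`, then
`limsup_{s→∞} λ₁ᴺ(s) ≤ λ₁ᴺᴺ(a,b)`. -/
theorem limsup_lambdaN_le_lambdaNN_of_segment_ID
    (m c : ℝ → ℝ) (hm : ContDiff ℝ 2 m) (hc : Continuous c)
    (a b : ℝ) (ha : 0 < a) (hab : a < b) (hb : b < 1)
    (hseg : ∃ ε₀ > (0:ℝ),
      (∀ x ∈ Set.Icc a b, m x = m a) ∧
      MonotoneOn m (Set.Icc (a - ε₀) a) ∧
      AntitoneOn m (Set.Icc b (b + ε₀)) ∧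
      (∀ ε ∈ Set.Ioo (0:ℝ) ε₀,
        (∃ x ∈ Set.Ioo (a - ε) a, 0 < deriv m x) ∧
        (∃ y ∈ Set.Ioo b (b + ε), deriv m y < 0))) :
    Filter.limsup (lambdaN m c) Filter.atTop ≤ lambdaIJ c false false a b := by
  obtain ⟨ε₀, hε₀, hconst, hmono, hanti, hder⟩ := hseg
  obtain ⟨K, hK₀, hK⟩ := exists_nonneg_forall_neg_le hc 0 1
  refine le_of_forall_pos_le_add fun η hη => limsup_le_of_le
    (isCoboundedUnder_le_of_le atTop (neg_le_lambdaN hm.continuous hc hK₀ hK)) ?_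
  obtain ⟨φ, hφ, hφn, hφE⟩ := exists_lt_lambdaIJ_add c hab hη
  have hφK : ∫ x in a..b, (deriv φ x ^ 2 + (c x + K) * φ x ^ 2) <
      lambdaIJ c false false a b + η + K := by
    have h := integral_energy_add_const (w := fun _ => 1) continuous_const hc hφ K a b
    simp only [one_mul, hφn, mul_one] at h
    linarith
  obtain ⟨δ, ⟨hδ, hδr⟩, ψ, hψ, hψ_out, hψn, hψE⟩ :=
    exists_localized_of_integral_lt (by fun_prop) hab.le hφ hφn hφK
      (lt_min (half_pos hε₀) (lt_min ha (sub_pos.2 hb)))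
  rw [lt_min_iff, lt_min_iff] at hδr
  obtain ⟨θ, hθ, hmθ⟩ := exists_lt_forall_le_of_deriv_ne_zero hmono hanti
    (hconst b ⟨hab.le, le_rfl⟩) (by linarith) (hder δ ⟨hδ, by linarith⟩).1
    (hder δ ⟨hδ, by linarith⟩).2
  filter_upwards [eventually_lambdaN_le_of_localized hm.continuous hc hψ hK (by linarith)
    (by linarith) hab.le (by linarith) (by linarith) hconst
    (isMaxOn_of_monotoneOn_of_antitoneOn hconst hmono hanti hab.le (by linarith)) hθ hmθ
    hψ_out hψn hψE] with s hs
  linarith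
end

section
/- Assume (a,b) ⊆ [0,1] is an open interval on which m'(x) ≠ 0 for every x ∈ (a,b). Then w(s,·) → 0 locally uniformly in (a,b) as s → ∞; that is, for every compact set K ⊂ (a,b), sup_{x ∈ K} w(s,x) → 0 as s → ∞. -/
/-!
Where `m' ≠ 0`, the potential `s² m'² + s m'' + c - λ₁ᴺ(s)` of the equation for `w` is at
least `δ s²` for large `s`, because testing the Rayleigh quotient with constants gives
`λ₁ᴺ(s) ≤ max c`. Near every point `x₀` of `K` this makes `w'' ≥ δ s² w`, so the positive
function `w` grows quadratically away from `x₀` on the side towards which it does not decrease: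
`w ≥ w(x₀) δ s² d² / 8` on an interval of length `d / 2`. The normalization `∫ w² = 1` then
forces `w(x₀) = O(s⁻²)` uniformly on `K`.
-/

open MeasureTheory Filter Set

/-- `v` is a positive, `L²`-normalized principal eigenfunction (in the transformed
variable `w = e^{s m} φ`) associated with the eigenvalue `lam` and parameter `s`. -/
def IsPrincipalEigenfunction (m c : ℝ → ℝ) (lam s : ℝ) (v : ℝ → ℝ) : Prop :=
  ContDiff ℝ 2 v ∧ (∀ x ∈ Set.Icc (0:ℝ) 1, 0 < v x) ∧
  (∀ x ∈ Set.Ioo (0:ℝ) 1,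
    -(deriv (deriv v) x) + (s ^ 2 * (deriv m x) ^ 2 + s * deriv (deriv m) x + c x) * v x
      = lam * v x) ∧
  deriv v 0 = s * v 0 * deriv m 0 ∧ deriv v 1 = s * v 1 * deriv m 1 ∧
  (∫ x in (0:ℝ)..1, (v x) ^ 2) = 1

open Metric

lemma sub_le_sub_of_hasDerivAt_le {f g f' g' : ℝ → ℝ} {p q : ℝ}
    (hf : ∀ x ∈ Icc p q, HasDerivAt f (f' x) x) (hg : ∀ x ∈ Icc p q, HasDerivAt g (g' x) x)
    (hle : ∀ x ∈ Ioo p q, f' x ≤ g' x) : ∀ x ∈ Icc p q, f x - f p ≤ g x - g p := by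
  have hgf : ∀ x ∈ Icc p q, HasDerivAt (g - f) (g' x - f' x) x :=
    fun x hx => (hg x hx).sub (hf x hx)
  have hmono : MonotoneOn (g - f) (Icc p q) := by
    refine monotoneOn_of_deriv_nonneg (convex_Icc p q)
      (fun x hx => (hgf x hx).continuousAt.continuousWithinAt) ?_ ?_ <;> rw [interior_Icc]
    · exact fun x hx => (hgf x (Ioo_subset_Icc_self hx)).differentiableAt.differentiableWithinAt
    · intro x hx
      rw [(hgf x (Ioo_subset_Icc_self hx)).deriv, sub_nonneg]
      exact hle x hx
  intro x hx
  have := hmono (left_mem_Icc.2 (hx.1.trans hx.2)) hx hx.1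
  simp only [Pi.sub_apply] at this
  linarith

lemma mul_one_add_le_of_mul_le_deriv2 {f f' f'' : ℝ → ℝ} {p q e : ℝ}
    (hf : ∀ x ∈ Icc p q, HasDerivAt f (f' x) x) (hf' : ∀ x ∈ Icc p q, HasDerivAt f' (f'' x) x)
    (he : 0 ≤ e) (hf0 : ∀ x ∈ Icc p q, 0 ≤ f x) (hfp : 0 ≤ f' p)
    (hode : ∀ x ∈ Icc p q, e * f x ≤ f'' x) :
    ∀ x ∈ Icc p q, f p * (1 + e * (x - p) ^ 2 / 2) ≤ f x := by
  have hconst : ∀ (k : ℝ), ∀ x ∈ Icc p q, HasDerivAt (fun _ => k) 0 x :=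
    fun k x _ => hasDerivAt_const x k
  have hf'_nonneg : ∀ x ∈ Icc p q, 0 ≤ f' x := by
    intro x hx
    have := sub_le_sub_of_hasDerivAt_le (hconst 0) hf' (fun y hy => ?_) x hx
    · linarith
    · exact (mul_nonneg he (hf0 y (Ioo_subset_Icc_self hy))).trans
        (hode y (Ioo_subset_Icc_self hy))
  have hf_ge : ∀ x ∈ Icc p q, f p ≤ f x := by
    intro x hx
    have := sub_le_sub_of_hasDerivAt_le (hconst 0) hf
      (fun y hy => hf'_nonneg y (Ioo_subset_Icc_self hy)) x hx
    linarith
  have hf'_ge : ∀ x ∈ Icc p q, e * f p * (x - p) ≤ f' x := by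
    intro x hx
    have hlin : ∀ y ∈ Icc p q, HasDerivAt (fun y => e * f p * y) (e * f p) y :=
      fun y _ => by simpa using (hasDerivAt_id y).const_mul (e * f p)
    have := sub_le_sub_of_hasDerivAt_le hlin hf' (fun y hy => ?_) x hx
    · linarith [hf'_nonneg x hx]
    · exact (mul_le_mul_of_nonneg_left (hf_ge y (Ioo_subset_Icc_self hy)) he).trans
        (hode y (Ioo_subset_Icc_self hy))
  have hquad : ∀ y ∈ Icc p q,
      HasDerivAt (fun y => e * f p * ((y - p) ^ 2 / 2)) (e * f p * (y - p)) y := by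
    intro y _
    refine (((((hasDerivAt_id y).sub_const p).fun_pow 2).div_const 2).const_mul
      (e * f p)).congr_deriv ?_
    simp only [id, Nat.cast_ofNat]
    ring
  intro x hx
  have := sub_le_sub_of_hasDerivAt_le hquad hf
    (fun y hy => hf'_ge y (Ioo_subset_Icc_self hy)) x hx
  simp only [sub_self] at this
  nlinarith

lemma exists_Icc_mul_le_of_mul_le_deriv2 {v v' v'' : ℝ → ℝ} {x₀ d e : ℝ}
    (hv : ∀ x, HasDerivAt v (v' x) x) (hv' : ∀ x, HasDerivAt v' (v'' x) x)
    (hd : 0 ≤ d) (he : 0 ≤ e) (hv0 : ∀ x ∈ Icc (x₀ - d) (x₀ + d), 0 ≤ v x)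
    (hode : ∀ x ∈ Icc (x₀ - d) (x₀ + d), e * v x ≤ v'' x) :
    ∃ r, x₀ - d ≤ r ∧ r + d / 2 ≤ x₀ + d ∧
      ∀ y ∈ Icc r (r + d / 2), v x₀ * (e * d ^ 2 / 8) ≤ v y := by
  have hvx₀ : 0 ≤ v x₀ := hv0 x₀ ⟨by linarith, by linarith⟩
  have hgrowth : ∀ t, d / 2 ≤ t → v x₀ * (e * d ^ 2 / 8) ≤ v x₀ * (1 + e * t ^ 2 / 2) := by
    intro t ht
    have : (d / 2) ^ 2 ≤ t ^ 2 := pow_le_pow_left₀ (by linarith) ht 2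
    gcongr
    nlinarith [mul_le_mul_of_nonneg_left this he]
  rcases le_or_gt 0 (v' x₀) with hright | hleft
  · refine ⟨x₀ + d / 2, by linarith, by linarith, fun y hy => ?_⟩
    have := mul_one_add_le_of_mul_le_deriv2 (fun x _ => hv x) (fun x _ => hv' x) he
      (fun x hx => hv0 x ⟨by linarith [hx.1], hx.2⟩) hright
      (fun x hx => hode x ⟨by linarith [hx.1], hx.2⟩) y ⟨by linarith [hy.1], by linarith [hy.2]⟩
    exact (hgrowth _ (by linarith [hy.1])).trans this
  · refine ⟨x₀ - d, le_rfl, by linarith, fun y hy => ?_⟩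
    have hw : ∀ x, HasDerivAt (fun x => v (2 * x₀ - x)) (-v' (2 * x₀ - x)) x :=
      fun x => (hv _).comp_const_sub _ x
    have hw' : ∀ x, HasDerivAt (fun x => -v' (2 * x₀ - x)) (v'' (2 * x₀ - x)) x :=
      fun x => by simpa using ((hv' _).comp_const_sub _ x).fun_neg
    have := mul_one_add_le_of_mul_le_deriv2 (p := x₀) (q := x₀ + d) (fun x _ => hw x)
      (fun x _ => hw' x) he (fun x hx => hv0 _ ⟨by linarith [hx.2], by linarith [hx.1]⟩)
      (by rw [two_mul, add_sub_cancel_right]; linarith)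
      (fun x hx => hode _ ⟨by linarith [hx.2], by linarith [hx.1]⟩) (2 * x₀ - y)
      ⟨by linarith [hy.2], by linarith [hy.1]⟩
    rw [two_mul, add_sub_cancel_right, sub_sub_cancel] at this
    exact (hgrowth _ (by linarith [hy.2])).trans this

lemma mul_sq_le_integral_sq {v : ℝ → ℝ} (hv : Continuous v) {a b r t k : ℝ}
    (har : a ≤ r) (hrt : r ≤ t) (htb : t ≤ b) (hk : 0 ≤ k) (hkv : ∀ y ∈ Icc r t, k ≤ v y) :
    (t - r) * k ^ 2 ≤ ∫ x in a..b, v x ^ 2 := by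
  calc (t - r) * k ^ 2 = ∫ _ in r..t, k ^ 2 := by simp
    _ ≤ ∫ x in r..t, v x ^ 2 :=
      intervalIntegral.integral_mono_on hrt intervalIntegrable_const
        ((hv.pow 2).intervalIntegrable _ _) fun y hy => pow_le_pow_left₀ hk (hkv y hy) 2
    _ ≤ ∫ x in a..b, v x ^ 2 :=
      intervalIntegral.integral_mono_interval har hrt htb
        (ae_of_all _ fun y => sq_nonneg (v y)) ((hv.pow 2).intervalIntegrable _ _)

lemma sq_mul_le_integral_sq_of_mul_le_deriv2 {v : ℝ → ℝ} (hv : ContDiff ℝ 2 v) {a b x₀ d e : ℝ}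
    (ha : a ≤ x₀ - d) (hb : x₀ + d ≤ b) (hd : 0 ≤ d) (he : 0 ≤ e)
    (hv0 : ∀ x ∈ Icc (x₀ - d) (x₀ + d), 0 ≤ v x)
    (hode : ∀ x ∈ Icc (x₀ - d) (x₀ + d), e * v x ≤ deriv (deriv v) x) :
    v x₀ ^ 2 * (e * d ^ 2 / 8) ^ 2 * (d / 2) ≤ ∫ x in a..b, v x ^ 2 := by
  have hv1 : ContDiff ℝ 1 (deriv v) := hv.iterate_deriv' 1 1
  obtain ⟨r, hr, hrd, hrv⟩ := exists_Icc_mul_le_of_mul_le_deriv2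
    (fun x => (hv.differentiable (by norm_num) x).hasDerivAt)
    (fun x => (hv1.differentiable one_ne_zero x).hasDerivAt) hd he hv0 hode
  have := mul_sq_le_integral_sq hv.continuous (ha.trans hr) (by linarith) (hrd.trans hb)
    (mul_nonneg (hv0 x₀ ⟨by linarith, by linarith⟩) (by positivity)) hrv
  calc v x₀ ^ 2 * (e * d ^ 2 / 8) ^ 2 * (d / 2)
      = (r + d / 2 - r) * (v x₀ * (e * d ^ 2 / 8)) ^ 2 := by ring
    _ ≤ _ := this

def rayleighValues (m c : ℝ → ℝ) (s : ℝ) : Set ℝ :=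
  {l : ℝ | ∃ φ : ℝ → ℝ, ContDiff ℝ 1 φ ∧
    (∫ x in (0:ℝ)..1, Real.exp (2 * s * m x) * (φ x) ^ 2) = 1 ∧
    l = ∫ x in (0:ℝ)..1, Real.exp (2 * s * m x) * ((deriv φ x) ^ 2 + c x * (φ x) ^ 2)}

lemma le_of_mem_rayleighValues {m c : ℝ → ℝ} (hm : Continuous m) (hc : Continuous c) {s C l : ℝ}
    (hC : ∀ x ∈ Icc (0 : ℝ) 1, C ≤ c x) (hl : l ∈ rayleighValues m c s) : C ≤ l := by
  obtain ⟨φ, hφ, hφ1, rfl⟩ := hl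
  have hφ' : Continuous (deriv φ) := hφ.continuous_deriv le_rfl
  have hφc := hφ.continuous
  calc C = ∫ x in (0:ℝ)..1, C * (Real.exp (2 * s * m x) * φ x ^ 2) := by
        rw [intervalIntegral.integral_const_mul, hφ1, mul_one]
    _ ≤ _ := by
      refine intervalIntegral.integral_mono_on zero_le_one
        ((by fun_prop : Continuous _).intervalIntegrable _ _)
        ((by fun_prop : Continuous _).intervalIntegrable _ _) fun x hx => ?_
      have hexp := (Real.exp_pos (2 * s * m x)).le
      nlinarith [mul_nonneg (mul_nonneg hexp (sub_nonneg.2 (hC x hx))) (sq_nonneg (φ x)),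
        mul_nonneg hexp (sq_nonneg (deriv φ x))]

lemma bddBelow_rayleighValues {m c : ℝ → ℝ} (hm : Continuous m) (hc : Continuous c) (s : ℝ) :
    BddBelow (rayleighValues m c s) := by
  obtain ⟨C, hC⟩ := (isCompact_Icc (a := (0 : ℝ)) (b := 1)).exists_bound_of_continuousOn
    hc.continuousOn
  exact ⟨-C, fun l => le_of_mem_rayleighValues hm hc fun x hx => neg_le_of_abs_le (hC x hx)⟩

lemma lambdaN_le_s5 {m c : ℝ → ℝ} (hm : Continuous m) (hc : Continuous c) {C : ℝ}
    (hC : ∀ x ∈ Icc (0 : ℝ) 1, c x ≤ C) (s : ℝ) : lambdaN m c s ≤ C := by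
  set I := ∫ x in (0:ℝ)..1, Real.exp (2 * s * m x)
  have hI : 0 < I := intervalIntegral.intervalIntegral_pos_of_pos
    ((by fun_prop : Continuous _).intervalIntegrable 0 1) (fun x => Real.exp_pos _) one_pos
  have hnorm : (∫ x in (0:ℝ)..1, Real.exp (2 * s * m x) * I⁻¹) = 1 := by
    rw [intervalIntegral.integral_mul_const, mul_inv_cancel₀ hI.ne']
  set t := (√I)⁻¹
  have ht : t ^ 2 = I⁻¹ := by rw [inv_pow, Real.sq_sqrt hI.le]
  have hmem : ∫ x in (0:ℝ)..1, Real.exp (2 * s * m x) * (c x * I⁻¹) ∈ rayleighValues m c s :=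
    ⟨fun _ => t, contDiff_const, by simpa [ht] using hnorm, by simp [ht]⟩
  calc lambdaN m c s ≤ ∫ x in (0:ℝ)..1, Real.exp (2 * s * m x) * (c x * I⁻¹) :=
        csInf_le (bddBelow_rayleighValues hm hc s) hmem
    _ ≤ ∫ x in (0:ℝ)..1, C * (Real.exp (2 * s * m x) * I⁻¹) := by
        refine intervalIntegral.integral_mono_on zero_le_one
          ((by fun_prop : Continuous _).intervalIntegrable _ _)
          ((by fun_prop : Continuous _).intervalIntegrable _ _) fun x hx => ?_
        have := mul_le_mul_of_nonneg_right (hC x hx) (inv_nonneg.2 hI.le)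
        nlinarith [Real.exp_pos (2 * s * m x)]
    _ = C := by rw [intervalIntegral.integral_const_mul, hnorm, mul_one]

lemma exists_pos_eventually_mul_sq_le_potential {m c : ℝ → ℝ} (hm : ContDiff ℝ 2 m)
    (hc : Continuous c) {L : Set ℝ} (hL : IsCompact L) (hm' : ∀ x ∈ L, deriv m x ≠ 0) :
    ∃ δ > 0, ∀ᶠ s in atTop, ∀ x ∈ L,
      δ * s ^ 2 ≤ s ^ 2 * deriv m x ^ 2 + s * deriv (deriv m) x + c x - lambdaN m c s := by
  have hm1 : ContDiff ℝ 1 (deriv m) := hm.iterate_deriv' 1 1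
  obtain ⟨M, hM, hMm⟩ : ∃ M > 0, ∀ x ∈ L, M ≤ deriv m x ^ 2 :=
    hL.exists_forall_le' (hm1.continuous.pow 2).continuousOn fun x hx => by
      simpa using pow_pos (abs_pos.2 (hm' x hx)) 2
  obtain ⟨C₂, hC₂⟩ := hL.exists_bound_of_continuousOn (hm1.continuous_deriv le_rfl).continuousOn
  obtain ⟨C₀, hC₀⟩ := hL.exists_bound_of_continuousOn hc.continuousOn
  obtain ⟨C₁, hC₁⟩ := (isCompact_Icc (a := (0 : ℝ)) (b := 1)).exists_bound_of_continuousOn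
    hc.continuousOn
  have hlam : ∀ s, lambdaN m c s ≤ C₁ :=
    lambdaN_le_s5 hm.continuous hc fun x hx => le_of_abs_le (hC₁ x hx)
  set B := C₂ + C₀ + C₁
  refine ⟨M / 2, half_pos hM, ?_⟩
  filter_upwards [eventually_ge_atTop (max 1 (2 * B / M))] with s hs x hx
  have hs1 : 1 ≤ s := le_of_max_le_left hs
  have hsB : 2 * B ≤ s * M := (div_le_iff₀ hM).1 (le_of_max_le_right hs)
  have hm2 : -C₂ ≤ deriv (deriv m) x := neg_le_of_abs_le (hC₂ x hx)
  have hcx : -C₀ ≤ c x := neg_le_of_abs_le (hC₀ x hx)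
  have hB : 0 ≤ C₀ + C₁ := by
    linarith [(norm_nonneg _).trans (hC₀ x hx),
      (norm_nonneg _).trans (hC₁ 0 ⟨le_rfl, zero_le_one⟩)]
  nlinarith [mul_le_mul_of_nonneg_left (hMm x hx) (sq_nonneg s), mul_le_mul_of_nonneg_left hm2
    (by linarith : (0 : ℝ) ≤ s), mul_le_mul_of_nonneg_left hsB (by linarith : (0 : ℝ) ≤ s),
    hlam s]

lemma tendstoUniformlyOn_zero_of_sq_mul_le {ι α : Type*} {l : Filter ι} {f : ι → α → ℝ}
    {g : ι → ℝ} {K : Set α} (hg : Tendsto g l atTop)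
    (hfg : ∀ᶠ i in l, ∀ x ∈ K, f i x ^ 2 * g i ≤ 1) :
    TendstoUniformlyOn f (fun _ => 0) l K := by
  rw [Metric.tendstoUniformlyOn_iff]
  intro ε hε
  filter_upwards [hfg, hg.eventually_gt_atTop (1 / ε ^ 2)] with i hi hgi x hx
  rw [dist_zero_left, Real.norm_eq_abs]
  by_contra! h
  have hε2 : ε ^ 2 ≤ f i x ^ 2 := by simpa using pow_le_pow_left₀ hε.le h 2
  have : 1 < ε ^ 2 * g i := by rwa [div_lt_iff₀' (by positivity)] at hgi
  nlinarith [hi x hx, (by positivity : (0:ℝ) < 1 / ε ^ 2).trans hgi]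

/-- Lemma 2.3 (i): if `m' ≠ 0` on an open interval `(a,b) ⊆ [0,1]`, then the
principal eigenfunctions `w(s,·)` tend to `0` locally uniformly in `(a,b)` as `s → ∞`. -/
theorem eigenfunction_tendsto_zero_locally_uniformly_of_deriv_ne_zero
    (m c : ℝ → ℝ) (hm : ContDiff ℝ 2 m) (hc : Continuous c)
    (w : ℝ → ℝ → ℝ)
    (hw : ∀ s > (0:ℝ), IsPrincipalEigenfunction m c (lambdaN m c s) s (w s))
    (a b : ℝ) (hab : Set.Ioo a b ⊆ Set.Icc (0:ℝ) 1)
    (hm' : ∀ x ∈ Set.Ioo a b, deriv m x ≠ 0) :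
    ∀ K : Set ℝ, IsCompact K → K ⊆ Set.Ioo a b →
      TendstoUniformlyOn (fun s x => w s x) (fun _ => (0:ℝ)) Filter.atTop K := by
  intro K hK hKab
  obtain ⟨d, hd, hKd⟩ := hK.exists_cthickening_subset_open isOpen_Ioo hKab
  have hKd01 : cthickening d K ⊆ Ioo 0 1 :=
    interior_Icc (a := (0 : ℝ)) (b := 1) ▸ hKd.trans (interior_maximal hab isOpen_Ioo)
  obtain ⟨δ, hδ, hpot⟩ := exists_pos_eventually_mul_sq_le_potential hm hc hK.cthickening
    fun x hx => hm' x (hKd hx)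
  refine tendstoUniformlyOn_zero_of_sq_mul_le (g := fun s => (δ * s ^ 2 * d ^ 2 / 8) ^ 2 * (d / 2))
    ?_ ?_
  · exact (tendsto_pow_atTop two_ne_zero |>.comp <| tendsto_pow_atTop two_ne_zero
      |>.const_mul_atTop hδ |>.atTop_mul_const (by positivity) |>.atTop_div_const (by positivity))
      |>.atTop_mul_const (by positivity)
  filter_upwards [hpot, eventually_gt_atTop 0] with s hs hs0 x hx
  obtain ⟨hC2, hpos, hode, -, -, hnorm⟩ := hw s hs0
  have hball : Icc (x - d) (x + d) ⊆ cthickening d K :=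
    Real.closedBall_eq_Icc ▸ closedBall_subset_cthickening hx d
  have hball01 : Icc (x - d) (x + d) ⊆ Icc 0 1 := (hball.trans hKd01).trans Ioo_subset_Icc_self
  have hode' : ∀ y ∈ Icc (x - d) (x + d), δ * s ^ 2 * w s y ≤ deriv (deriv (w s)) y := by
    intro y hy
    have := mul_le_mul_of_nonneg_right (hs y (hball hy)) (hpos y (hball01 hy)).le
    linarith [hode y (hKd01 (hball hy))]
  rw [← hnorm, ← mul_assoc]
  exact sq_mul_le_integral_sq_of_mul_le_deriv2 hC2 (hball01 ⟨le_rfl, by linarith⟩).1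
    (hball01 ⟨by linarith, le_rfl⟩).2 hd.le (by positivity) (fun y hy => (hpos y (hball01 hy)).le)
    hode'
end
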